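/- arXiv:1408.6039 — 2 statements merged into one kernel-verified Lean document; each statement's English description precedes it below -/
import Mathlib

section
/- Let P > 0 and 0 < N_1 ≤ N_2 ≤ N_3 be reals, and let R_1, R_2, R_3 ≥ 0. Suppose there exist α_1, α_2, α_3 ≥ 0 with α_1 + α_2 + α_3 = 1 such that, with B_1 = C(α_1 P/N_1), B_2 = C(α_2 P/(α_1 P + N_2)), and B_3 = C(α_3 P/((α_1+α_2)P + N_2)), one has R_1 + R_2 + R_3 < B_1 + B_2 + B_3, R_2 + R_3 < B_2 + B_3, and R_3 < min{C(α_3 P/N_3), B_3}. Then, with α = α_1: R_1 + R_2 + R_3 < C((1−α)P/(αP+N_2)) + C(αP/N_1), R_2 < C((1−α)P/(αP+N_2)), R_2 + R_3 < C((1−α)P/(αP+N_2)) + C(αP/N_3), and R_3 < C(P/N_3). -/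
/-- `C q = (1/2) · log(1+q)` (natural logarithm). -/
noncomputable def C (q : ℝ) : ℝ := (1 / 2) * Real.log (1 + q)

/-!
Splitting the power `(1 - α₁) P = α₂ P + α₃ P` into two superposed layers costs nothing:
by the chain rule for Gaussian capacities,
`C(α₂ P / (α₁ P + N₂)) + C(α₃ P / ((α₁ + α₂) P + N₂)) = C((1 - α₁) P / (α₁ P + N₂))`.
With this identity the old sum constraints become the new ones, and the remaining
conditions follow because `C` is nonnegative and monotone.
-/

lemma C_nonneg {q : ℝ} (hq : 0 ≤ q) : 0 ≤ C q :=
  mul_nonneg (by norm_num) (Real.log_nonneg (by linarith))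

lemma C_le_C {q r : ℝ} (hq : -1 < q) (hqr : q ≤ r) : C q ≤ C r := by
  unfold C
  gcongr
  linarith

lemma C_add_C_eq {s x y : ℝ} (hs : 0 < s) (hx : 0 ≤ x) (hy : 0 ≤ y) :
    C (x / s) + C (y / (s + x)) = C ((x + y) / s) := by
  unfold C
  rw [← mul_add, ← Real.log_mul (by positivity) (by positivity)]
  congr 2
  field_simp
  ring

theorem group7_inner_larger_general (P N₁ N₂ N₃ R₁ R₂ R₃ α₁ α₂ α₃ : ℝ)
    (hP : 0 < P) (hN1 : 0 < N₁) (hN12 : N₁ ≤ N₂) (hN23 : N₂ ≤ N₃)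
    (hR3 : 0 ≤ R₃)
    (hα1 : 0 ≤ α₁) (hα2 : 0 ≤ α₂) (hα3 : 0 ≤ α₃) (hsum : α₁ + α₂ + α₃ = 1)
    (hold1 : R₁ + R₂ + R₃ < C (α₁ * P / N₁) + C (α₂ * P / (α₁ * P + N₂)) +
        C (α₃ * P / ((α₁ + α₂) * P + N₂)))
    (hold2 : R₂ + R₃ < C (α₂ * P / (α₁ * P + N₂)) +
        C (α₃ * P / ((α₁ + α₂) * P + N₂)))
    (hold3 : R₃ < min (C (α₃ * P / N₃)) (C (α₃ * P / ((α₁ + α₂) * P + N₂)))) :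
    R₁ + R₂ + R₃ < C ((1 - α₁) * P / (α₁ * P + N₂)) + C (α₁ * P / N₁) ∧
    R₂ < C ((1 - α₁) * P / (α₁ * P + N₂)) ∧
    R₂ + R₃ < C ((1 - α₁) * P / (α₁ * P + N₂)) + C (α₁ * P / N₃) ∧
    R₃ < C (P / N₃) := by
  have hN3 : 0 < N₃ := by linarith
  have hs : 0 < α₁ * P + N₂ := by nlinarith
  have chain : C (α₂ * P / (α₁ * P + N₂)) + C (α₃ * P / ((α₁ + α₂) * P + N₂))
      = C ((1 - α₁) * P / (α₁ * P + N₂)) := by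
    rw [show (α₁ + α₂) * P + N₂ = α₁ * P + N₂ + α₂ * P by ring,
      show (1 - α₁) * P = α₂ * P + α₃ * P by linear_combination -P * hsum]
    exact C_add_C_eq hs (by positivity) (by positivity)
  have hC1 : 0 ≤ C (α₁ * P / N₃) := C_nonneg (by positivity)
  have hC3 : C (α₃ * P / N₃) ≤ C (P / N₃) :=
    C_le_C (by linarith [show 0 ≤ α₃ * P / N₃ by positivity])
      (by gcongr; nlinarith)
  have hR3_lt := lt_of_lt_of_le hold3 (min_le_left _ _)
  exact ⟨by linarith, by linarith, by linarith, by linarith⟩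

/-- For the member `G₁₇ ∪ G₂₁` of group 7, every rate triple in the best previously
existing inner bound (with powers `α₁, α₂, α₃`) also satisfies the conditions of the
proposed inner bound `R'_in` with `α = α₁`. -/
theorem group7_inner_larger (P N₁ N₂ N₃ R₁ R₂ R₃ α₁ α₂ α₃ : ℝ)
    (hP : 0 < P) (hN1 : 0 < N₁) (hN12 : N₁ ≤ N₂) (hN23 : N₂ ≤ N₃)
    (hR1 : 0 ≤ R₁) (hR2 : 0 ≤ R₂) (hR3 : 0 ≤ R₃)
    (hα1 : 0 ≤ α₁) (hα2 : 0 ≤ α₂) (hα3 : 0 ≤ α₃) (hsum : α₁ + α₂ + α₃ = 1)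
    (hold1 : R₁ + R₂ + R₃ < C (α₁ * P / N₁) + C (α₂ * P / (α₁ * P + N₂)) +
        C (α₃ * P / ((α₁ + α₂) * P + N₂)))
    (hold2 : R₂ + R₃ < C (α₂ * P / (α₁ * P + N₂)) +
        C (α₃ * P / ((α₁ + α₂) * P + N₂)))
    (hold3 : R₃ < min (C (α₃ * P / N₃)) (C (α₃ * P / ((α₁ + α₂) * P + N₂)))) :
    R₁ + R₂ + R₃ < C ((1 - α₁) * P / (α₁ * P + N₂)) + C (α₁ * P / N₁) ∧
    R₂ < C ((1 - α₁) * P / (α₁ * P + N₂)) ∧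
    R₂ + R₃ < C ((1 - α₁) * P / (α₁ * P + N₂)) + C (α₁ * P / N₃) ∧
    R₃ < C (P / N₃) :=
  group7_inner_larger_general P N₁ N₂ N₃ R₁ R₂ R₃ α₁ α₂ α₃ hP hN1 hN12 hN23 hR3 hα1 hα2 hα3 hsum
    hold1 hold2 hold3
end

section
/- Let P > 0 and 0 < N_1 ≤ N_2 ≤ N_3 be reals. Let W = {(R_1,R_2,R_3) ∈ ℝ³ : R_1,R_2,R_3 ≥ 0 and ∃α ∈ [0,1] with R_1 ≤ C(αP/N_1), R_1 + R_3 ≤ C(P/N_1), R_2 ≤ C((1−α)P/(αP+N_2)), R_3 ≤ C(P/N_3)} and S = {(R_1,R_2,R_3) ∈ ℝ³ : R_1,R_2,R_3 ≥ 0 and ∃α ∈ [0,1] with R_1 < C(αP/N_1), R_1 + R_3 < C(P/N_1), R_2 < C((1−α)P/(αP+N_2)), R_3 < C(P/N_3)}. Then W equals the closure of S in ℝ³. -/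
open Set Filter Topology Pointwise

theorem IsCompact.isClosed_lowerClosure {X : Type*} [AddCommGroup X] [PartialOrder X]
    [IsOrderedAddMonoid X] [TopologicalSpace X] [IsTopologicalAddGroup X] [ClosedIicTopology X]
    {s : Set X} (hs : IsCompact s) : IsClosed (lowerClosure s : Set X) := by
  have : (lowerClosure s : Set X) = s + Iic 0 := by
    conv_lhs => rw [← add_zero s, ← add_lowerClosure, lowerClosure_zero]
    rfl
  rw [this]
  exact isClosed_Iic.add_left_of_isCompact hs

theorem ContinuousOn.C {u : ℝ → ℝ} {s : Set ℝ} (hu : ContinuousOn u s) (h : ∀ x ∈ s, 0 ≤ u x) :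
    ContinuousOn (fun x => C (u x)) s := by
  unfold _root_.C
  exact continuousOn_const.mul (hu.const_add 1 |>.log fun x hx => by linarith [h x hx])

theorem C_pos {q : ℝ} (hq : 0 < q) : 0 < C q :=
  mul_pos one_half_pos (Real.log_pos (by linarith))

theorem mul_lt_of_lt_one_of_le_of_pos {t x y : ℝ} (ht₀ : 0 ≤ t) (ht₁ : t < 1) (hxy : x ≤ y)
    (hy : 0 < y) : t * x < y :=
  (mul_le_mul_of_nonneg_left hxy ht₀).trans_lt (mul_lt_of_lt_one_left hy ht₁)

theorem Filter.Tendsto.eventually_mul_lt {ι : Type*} {l : Filter ι} {f : ι → ℝ} {y t x : ℝ}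
    (hf : Tendsto f l (𝓝 y)) (hpos : ∀ᶠ i in l, 0 < f i) (hx : 0 ≤ x) (hxy : x ≤ y) (ht : t < 1) :
    ∀ᶠ i in l, t * x < f i := by
  rcases lt_or_ge (t * x) y with hlt | hle
  · exact hf.eventually (lt_mem_nhds hlt)
  · -- `x ≤ y ≤ t x` with `t < 1` forces `x = 0`
    have hx₀ : x = 0 := le_antisymm (by nlinarith) hx
    simpa [hx₀] using hpos

section RateRegion

variable (f g : ℝ → ℝ) (c₁₃ c₃ : ℝ)

def outerRegion : Set (ℝ × ℝ × ℝ) :=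
  {r | 0 ≤ r.1 ∧ 0 ≤ r.2.1 ∧ 0 ≤ r.2.2 ∧ ∃ α : ℝ, 0 ≤ α ∧ α ≤ 1 ∧
    r.1 ≤ f α ∧ r.1 + r.2.2 ≤ c₁₃ ∧ r.2.1 ≤ g α ∧ r.2.2 ≤ c₃}

def innerRegion : Set (ℝ × ℝ × ℝ) :=
  {r | 0 ≤ r.1 ∧ 0 ≤ r.2.1 ∧ 0 ≤ r.2.2 ∧ ∃ α : ℝ, 0 ≤ α ∧ α ≤ 1 ∧
    r.1 < f α ∧ r.1 + r.2.2 < c₁₃ ∧ r.2.1 < g α ∧ r.2.2 < c₃}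

variable {f g c₁₃ c₃}

theorem innerRegion_subset_outerRegion : innerRegion f g c₁₃ c₃ ⊆ outerRegion f g c₁₃ c₃ :=
  fun _ ⟨h₁, h₂, h₃, α, hα₀, hα₁, hr₁, hr₁₃, hr₂, hr₃⟩ =>
    ⟨h₁, h₂, h₃, α, hα₀, hα₁, hr₁.le, hr₁₃.le, hr₂.le, hr₃.le⟩

theorem outerRegion_eq_inter_preimage_lowerClosure :
    outerRegion f g c₁₃ c₃ = Ici 0 ∩ {r | r.1 + r.2.2 ≤ c₁₃} ∩ {r | r.2.2 ≤ c₃} ∩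
      (fun r => (r.1, r.2.1)) ⁻¹' lowerClosure ((fun α => (f α, g α)) '' Icc 0 1) := by
  ext r
  simp only [outerRegion, mem_ofPred_eq, mem_inter_iff, mem_Ici, Prod.le_def, Prod.fst_zero,
    Prod.snd_zero, mem_preimage, SetLike.mem_coe, mem_lowerClosure, mem_image, mem_Icc,
    exists_exists_and_eq_and]
  constructor
  · rintro ⟨h₁, h₂, h₃, α, hα₀, hα₁, hf, h₁₃, hg, h₃'⟩
    exact ⟨⟨⟨⟨h₁, h₂, h₃⟩, h₁₃⟩, h₃'⟩, α, ⟨hα₀, hα₁⟩, hf, hg⟩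
  · rintro ⟨⟨⟨⟨h₁, h₂, h₃⟩, h₁₃⟩, h₃'⟩, α, ⟨hα₀, hα₁⟩, hf, hg⟩
    exact ⟨h₁, h₂, h₃, α, hα₀, hα₁, hf, h₁₃, hg, h₃'⟩

theorem isClosed_outerRegion (hf : ContinuousOn f (Icc 0 1)) (hg : ContinuousOn g (Icc 0 1)) :
    IsClosed (outerRegion f g c₁₃ c₃) := by
  rw [outerRegion_eq_inter_preimage_lowerClosure]
  exact ((isClosed_Ici.inter (isClosed_le (by fun_prop) continuous_const)).inter
    (isClosed_le (by fun_prop) continuous_const)).inter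
    ((isCompact_Icc.image_of_continuousOn (hf.prodMk hg)).isClosed_lowerClosure.preimage
      (by fun_prop))

theorem exists_mem_Icc_mul_lt (hf : ContinuousOn f (Icc 0 1)) (hg : ContinuousOn g (Icc 0 1))
    (hf₀ : ∀ α ∈ Ioo 0 1, 0 < f α) (hg₀ : ∀ α ∈ Ioo 0 1, 0 < g α) {α x y t : ℝ}
    (hα : α ∈ Icc 0 1) (hx : 0 ≤ x) (hxf : x ≤ f α) (hy : 0 ≤ y) (hyg : y ≤ g α) (ht : t < 1) :
    ∃ β ∈ Icc 0 1, t * x < f β ∧ t * y < g β := by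
  have : (𝓝[Ioo 0 1] α).NeBot := by
    rwa [← mem_closure_iff_nhdsWithin_neBot, closure_Ioo zero_ne_one]
  have hfx := ((hf α hα).mono Ioo_subset_Icc_self).tendsto.eventually_mul_lt
    (eventually_mem_nhdsWithin.mono hf₀) hx hxf ht
  have hgy := ((hg α hα).mono Ioo_subset_Icc_self).tendsto.eventually_mul_lt
    (eventually_mem_nhdsWithin.mono hg₀) hy hyg ht
  obtain ⟨β, hβ, hfβ, hgβ⟩ := (eventually_mem_nhdsWithin.and (hfx.and hgy)).exists
  exact ⟨β, Ioo_subset_Icc_self hβ, hfβ, hgβ⟩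

theorem smul_mem_innerRegion (hf : ContinuousOn f (Icc 0 1)) (hg : ContinuousOn g (Icc 0 1))
    (hf₀ : ∀ α ∈ Ioo 0 1, 0 < f α) (hg₀ : ∀ α ∈ Ioo 0 1, 0 < g α) (hc₁₃ : 0 < c₁₃) (hc₃ : 0 < c₃)
    {r : ℝ × ℝ × ℝ} (hr : r ∈ outerRegion f g c₁₃ c₃) {t : ℝ} (ht₀ : 0 ≤ t) (ht₁ : t < 1) :
    t • r ∈ innerRegion f g c₁₃ c₃ := by
  obtain ⟨h₁, h₂, h₃, α, hα₀, hα₁, hr₁, hr₁₃, hr₂, hr₃⟩ := hr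
  obtain ⟨β, ⟨hβ₀, hβ₁⟩, hfβ, hgβ⟩ :=
    exists_mem_Icc_mul_lt hf hg hf₀ hg₀ ⟨hα₀, hα₁⟩ h₁ hr₁ h₂ hr₂ ht₁
  refine ⟨mul_nonneg ht₀ h₁, mul_nonneg ht₀ h₂, mul_nonneg ht₀ h₃, β, hβ₀, hβ₁, hfβ, ?_, hgβ,
    mul_lt_of_lt_one_of_le_of_pos ht₀ ht₁ hr₃ hc₃⟩
  simpa [mul_add] using mul_lt_of_lt_one_of_le_of_pos ht₀ ht₁ hr₁₃ hc₁₃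

theorem closure_innerRegion (hf : ContinuousOn f (Icc 0 1)) (hg : ContinuousOn g (Icc 0 1))
    (hf₀ : ∀ α ∈ Ioo 0 1, 0 < f α) (hg₀ : ∀ α ∈ Ioo 0 1, 0 < g α) (hc₁₃ : 0 < c₁₃) (hc₃ : 0 < c₃) :
    closure (innerRegion f g c₁₃ c₃) = outerRegion f g c₁₃ c₃ := by
  refine (closure_minimal innerRegion_subset_outerRegion (isClosed_outerRegion hf hg)).antisymm
    fun r hr => ?_
  have hlim : Tendsto (fun t : ℝ => t • r) (𝓝[<] 1) (𝓝 r) :=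
    ((continuous_id.smul continuous_const).tendsto' 1 r (one_smul ℝ r)).mono_left
      nhdsWithin_le_nhds
  refine mem_closure_of_tendsto hlim ?_
  filter_upwards [Ioo_mem_nhdsLT zero_lt_one] with t ht
  exact smul_mem_innerRegion hf hg hf₀ hg₀ hc₁₃ hc₃ hr ht.1.le ht.2

end RateRegion

/-- For the members `G₁₇ ∪ G₂₂` and `G₁₇ ∪ G₂₅` of group 7, the intersection of the
proposed outer bounds equals the closure of the proposed inner bound, establishing
the capacity. -/
theorem group7_capacity_22_25 (P N₁ N₂ N₃ : ℝ)
    (hP : 0 < P) (hN1 : 0 < N₁) (hN12 : N₁ ≤ N₂) (hN23 : N₂ ≤ N₃) :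
    {r : ℝ × ℝ × ℝ | 0 ≤ r.1 ∧ 0 ≤ r.2.1 ∧ 0 ≤ r.2.2 ∧ ∃ α : ℝ, 0 ≤ α ∧ α ≤ 1 ∧
        r.1 ≤ C (α * P / N₁) ∧ r.1 + r.2.2 ≤ C (P / N₁) ∧
        r.2.1 ≤ C ((1 - α) * P / (α * P + N₂)) ∧ r.2.2 ≤ C (P / N₃)} =
    closure {r : ℝ × ℝ × ℝ | 0 ≤ r.1 ∧ 0 ≤ r.2.1 ∧ 0 ≤ r.2.2 ∧
        ∃ α : ℝ, 0 ≤ α ∧ α ≤ 1 ∧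
        r.1 < C (α * P / N₁) ∧ r.1 + r.2.2 < C (P / N₁) ∧
        r.2.1 < C ((1 - α) * P / (α * P + N₂)) ∧ r.2.2 < C (P / N₃)} := by
  have hN₂ : 0 < N₂ := hN1.trans_le hN12
  have hN₃ : 0 < N₃ := hN₂.trans_le hN23
  have hf : ContinuousOn (fun α => C (α * P / N₁)) (Icc 0 1) :=
    ContinuousOn.C (by fun_prop) fun α hα => by have := hα.1; positivity
  have hg : ContinuousOn (fun α => C ((1 - α) * P / (α * P + N₂))) (Icc 0 1) := by
    refine ContinuousOn.C (by fun_prop (disch := intro α hα; have := hα.1; positivity))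
      fun α hα => ?_
    have := hα.1
    have := sub_nonneg.2 hα.2
    positivity
  have hf₀ : ∀ α ∈ Ioo (0 : ℝ) 1, 0 < C (α * P / N₁) := fun α hα =>
    C_pos (div_pos (mul_pos hα.1 hP) hN1)
  have hg₀ : ∀ α ∈ Ioo (0 : ℝ) 1, 0 < C ((1 - α) * P / (α * P + N₂)) := fun α hα => by
    have := hα.1
    have := sub_pos.2 hα.2
    exact C_pos (by positivity)
  exact (closure_innerRegion hf hg hf₀ hg₀ (C_pos (div_pos hP hN1)) (C_pos (div_pos hP hN₃))).symm
end
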